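/- Let A ∈ ℂ^{n×n}, B ∈ ℂ^{n×m}, C ∈ ℂ^{p×n}, D ∈ ℂ^{p×m}, and let G = C (z I − A)⁻¹ B + D be the associated p×m transfer matrix with entries in the field ℂ(z) of rational functions (well-defined since det(z I − A) is a nonzero polynomial). Then the rank of G over ℂ(z) equals m (full column normal rank) if and only if the system has a left inverse in the time-domain sense: for every input u : ℕ → ℂ^m, if the trajectory with x(0) = 0, x(k+1) = A x(k) + B u(k) produces output y(k) = C x(k) + D u(k) = 0 for all k ≥ 0, then u(k) = 0 for all k ≥ 0. -/

import Mathlib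

/-!
Expanding rational functions at `z = ∞` embeds `ℂ(z)` into the Laurent series in `w = z⁻¹`.
Through this embedding the transfer matrix acts on one-sided z-transforms: the state equation
becomes `(w⁻¹ - A) x̂ = B û`, hence `G û = ŷ` for every input `u` with output `y`.
Full column rank of `G` over `ℂ(z)` means its columns are linearly independent; this survives the
embedding into `ℂ((w))`, and as `ℂ((w))` is the fraction field of `ℂ[[w]]` it amounts to `G` killing
no nonzero vector of power series, i.e. no nonzero input producing zero output.
-/

set_option synthInstance.maxHeartbeats 1000000

noncomputable section

/-- State trajectory of `x(k+1) = A x(k) + B u(k)` with zero initial state. -/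
def trajZero {n m : ℕ} (A : Matrix (Fin n) (Fin n) ℂ) (B : Matrix (Fin n) (Fin m) ℂ)
    (u : ℕ → Fin m → ℂ) : ℕ → Fin n → ℂ
  | 0 => 0
  | k + 1 => A.mulVec (trajZero A B u k) + B.mulVec (u k)

/-- Transfer matrix `G(z) = C (zI - A)⁻¹ B + D` over the field `ℂ(z)`. -/
def transferMatrix {n m p : ℕ} (A : Matrix (Fin n) (Fin n) ℂ)
    (B : Matrix (Fin n) (Fin m) ℂ) (C : Matrix (Fin p) (Fin n) ℂ)
    (D : Matrix (Fin p) (Fin m) ℂ) : Matrix (Fin p) (Fin m) (RatFunc ℂ) :=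
  C.map (algebraMap ℂ (RatFunc ℂ)) *
    ((RatFunc.X : RatFunc ℂ) • (1 : Matrix (Fin n) (Fin n) (RatFunc ℂ)) -
      A.map (algebraMap ℂ (RatFunc ℂ)))⁻¹ *
    B.map (algebraMap ℂ (RatFunc ℂ)) + D.map (algebraMap ℂ (RatFunc ℂ))

open scoped PowerSeries LaurentSeries Matrix

namespace Matrix

variable {m n : Type*}

theorem rank_eq_card_iff_linearIndependent_col {K : Type*} [Field K] [Fintype n]
    (M : Matrix m n K) : M.rank = Fintype.card n ↔ LinearIndependent K M.col := by
  rw [rank_eq_finrank_span_cols, linearIndependent_iff_card_eq_finrank_span, Set.finrank,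
    eq_comm]

theorem linearIndependent_col_map_iff {K L : Type*} [Field K] [CommRing L] [IsDomain L]
    [Finite m] (f : K →+* L) (M : Matrix m n K) :
    LinearIndependent L (M.map f).col ↔ LinearIndependent K M.col :=
  letI := f.toAlgebra
  linearIndependent_algebraMap_comp_iff

theorem mulVec_injective_iff_of_isFractionRing (R : Type*) {K : Type*} [CommRing R] [Field K]
    [Algebra R K] [IsFractionRing R K] [Fintype n] (M : Matrix m n K) :
    Function.Injective M.mulVec ↔ ∀ v : n → R, M *ᵥ (algebraMap R K ∘ v) = 0 → v = 0 := by
  have hsum (v : n → R) : ∑ j, v j • M.col j = M *ᵥ (algebraMap R K ∘ v) := by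
    ext i
    simp [mulVec, dotProduct, Algebra.smul_def, mul_comm]
  simp only [mulVec_injective_iff, ← LinearIndependent.iff_fractionRing R K,
    Fintype.linearIndependent_iff, hsum, funext_iff, Pi.zero_apply]

end Matrix

section ExpansionAtInfinity

open Polynomial

variable (F : Type*) [Field F]

theorem PowerSeries.transcendental_X : Transcendental F (PowerSeries.X : F⟦X⟧) := by
  rw [transcendental_iff_injective]
  intro p q h
  simpa [aeval_def, PowerSeries.algebraMap_eq, eval₂_C_X_eq_coe] using h

theorem LaurentSeries.transcendental_inv_X :
    Transcendental F (algebraMap F⟦X⟧ F⸨X⸩ PowerSeries.X)⁻¹ := by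
  rw [Transcendental, IsAlgebraic.inv_iff, ← Transcendental]
  exact (PowerSeries.transcendental_X F).ringHom_of_comp_eq (RingHom.id F) _
    Function.surjective_id HahnSeries.ofPowerSeries_injective rfl

namespace RatFunc

def expandAtInfinity : RatFunc F →ₐ[F] F⸨X⸩ :=
  liftAlgHom (aeval (algebraMap F⟦X⟧ F⸨X⸩ PowerSeries.X)⁻¹)
    (nonZeroDivisors_le_comap_nonZeroDivisors_of_injective _
      (transcendental_iff_injective.mp (LaurentSeries.transcendental_inv_X F)))

theorem expandAtInfinity_X :
    expandAtInfinity F RatFunc.X = (algebraMap F⟦X⟧ F⸨X⸩ PowerSeries.X)⁻¹ := by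
  rw [expandAtInfinity, ← algebraMap_X, ← div_one (algebraMap F[X] _ _),
    ← map_one (algebraMap F[X] (RatFunc F)), liftAlgHom_apply_div, map_one, div_one, aeval_X]

theorem det_X_smul_one_sub_ne_zero {n : Type*} [Fintype n] [DecidableEq n] (A : Matrix n n F) :
    ((RatFunc.X : RatFunc F) • (1 : Matrix n n (RatFunc F)) -
      A.map (algebraMap F (RatFunc F))).det ≠ 0 := by
  have hchar : (RatFunc.X : RatFunc F) • (1 : Matrix n n (RatFunc F)) -
      A.map (algebraMap F (RatFunc F)) =
        (Matrix.charmatrix A).map (algebraMap F[X] (RatFunc F)) := by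
    ext i j
    by_cases h : i = j <;> simp [h, algebraMap_C]
  rw [hchar, ← RingHom.mapMatrix_apply, ← RingHom.map_det, ← Matrix.charpoly]
  exact (map_ne_zero_iff _ (algebraMap_injective F)).mpr A.charpoly_monic.ne_zero

end RatFunc

end ExpansionAtInfinity

namespace LaurentSeries

variable {R ι : Type*} [CommRing R]

def zTransform (s : ℕ → ι → R) : ι → R⸨X⸩ :=
  fun i => algebraMap R⟦X⟧ R⸨X⸩ (PowerSeries.mk fun k => s k i)

theorem zTransform_add (s t : ℕ → ι → R) :
    zTransform (fun k => s k + t k) = zTransform s + zTransform t := by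
  ext1 i
  simp only [zTransform, Pi.add_apply, ← map_add]
  rfl

theorem zTransform_mulVec {κ : Type*} [Fintype ι] (M : Matrix κ ι R) (s : ℕ → ι → R) :
    zTransform (fun k => M *ᵥ s k) = M.map (algebraMap R R⸨X⸩) *ᵥ zTransform s := by
  ext1 i
  have hmk : PowerSeries.mk (fun k => (M *ᵥ s k) i) =
      ∑ j, PowerSeries.C (M i j) * PowerSeries.mk (fun k => s k j) := by
    ext k
    simp [Matrix.mulVec, dotProduct, map_sum]
  rw [zTransform, hmk, map_sum]
  exact Finset.sum_congr rfl fun j _ => by rw [map_mul]; rfl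

theorem zTransform_eq_X_smul_shift (s : ℕ → ι → R) (h : s 0 = 0) :
    zTransform s = algebraMap R⟦X⟧ R⸨X⸩ PowerSeries.X • zTransform (fun k => s (k + 1)) := by
  ext1 i
  simp only [zTransform, Pi.smul_apply, smul_eq_mul, ← map_mul]
  congr 1
  ext (_ | k) <;> simp [h]

theorem zTransform_eq_zero_iff (s : ℕ → ι → R) : zTransform s = 0 ↔ s = 0 := by
  have hinj : Function.Injective (algebraMap R⟦X⟧ R⸨X⸩) := HahnSeries.ofPowerSeries_injective
  simp only [zTransform, funext_iff, Pi.zero_apply, map_eq_zero_iff _ hinj, PowerSeries.ext_iff,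
    PowerSeries.coeff_mk, map_zero]
  exact forall_comm

theorem zTransform_coeff (v : ι → R⟦X⟧) :
    zTransform (fun k i => PowerSeries.coeff k (v i)) = algebraMap R⟦X⟧ R⸨X⸩ ∘ v := by
  ext1 i
  simp only [zTransform, Function.comp_apply]
  congr 1
  ext
  simp

end LaurentSeries

section StateSpace

open Matrix LaurentSeries RatFunc

variable {n m p : ℕ} (A : Matrix (Fin n) (Fin n) ℂ) (B : Matrix (Fin n) (Fin m) ℂ)
  (C : Matrix (Fin p) (Fin n) ℂ) (D : Matrix (Fin p) (Fin m) ℂ)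

theorem zTransform_trajZero (u : ℕ → Fin m → ℂ) :
    ((algebraMap ℂ⟦X⟧ ℂ⸨X⸩ PowerSeries.X)⁻¹ • 1 - A.map (algebraMap ℂ ℂ⸨X⸩)) *ᵥ
      zTransform (trajZero A B u) = B.map (algebraMap ℂ ℂ⸨X⸩) *ᵥ zTransform u := by
  have hX : algebraMap ℂ⟦X⟧ ℂ⸨X⸩ PowerSeries.X ≠ 0 := by simp
  have hshift := zTransform_eq_X_smul_shift (trajZero A B u) rfl
  simp only [trajZero, zTransform_add, zTransform_mulVec] at hshift
  rw [sub_mulVec, smul_mulVec, one_mulVec, sub_eq_iff_eq_add', inv_smul_eq_iff₀ hX]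
  exact hshift

theorem map_transferMatrix_mulVec_zTransform (u : ℕ → Fin m → ℂ) :
    (transferMatrix A B C D).map (expandAtInfinity ℂ : RatFunc ℂ →+* ℂ⸨X⸩) *ᵥ zTransform u =
      zTransform (fun k => C *ᵥ trajZero A B u k + D *ᵥ u k) := by
  set ψ : RatFunc ℂ →+* ℂ⸨X⸩ := (expandAtInfinity ℂ : RatFunc ℂ →+* ℂ⸨X⸩)
  set E := (RatFunc.X : RatFunc ℂ) • (1 : Matrix (Fin n) (Fin n) (RatFunc ℂ)) -
    A.map (algebraMap ℂ (RatFunc ℂ))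
  have hconst {a b : ℕ} (M : Matrix (Fin a) (Fin b) ℂ) :
      (M.map (algebraMap ℂ (RatFunc ℂ))).map ψ = M.map (algebraMap ℂ ℂ⸨X⸩) := by
    ext1 i j
    exact (expandAtInfinity ℂ).commutes _
  have hE : E.map ψ =
      (algebraMap ℂ⟦X⟧ ℂ⸨X⸩ PowerSeries.X)⁻¹ • 1 - A.map (algebraMap ℂ ℂ⸨X⸩) := by
    ext1 i j
    by_cases h : i = j <;>
      simp [E, ψ, h, expandAtInfinity_X, -algebraMap_eq_C, AlgHom.commutes]
  have hinv : (E⁻¹).map ψ * E.map ψ = 1 := by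
    rw [← Matrix.map_mul, nonsing_inv_mul _ (det_X_smul_one_sub_ne_zero ℂ A).isUnit,
      Matrix.map_one _ (map_zero ψ) (map_one ψ)]
  have hstate : zTransform (trajZero A B u) =
      (E⁻¹).map ψ *ᵥ (B.map (algebraMap ℂ ℂ⸨X⸩) *ᵥ zTransform u) := by
    rw [← zTransform_trajZero, ← hE, mulVec_mulVec, hinv, one_mulVec]
  rw [transferMatrix, Matrix.map_add _ (map_add ψ), Matrix.map_mul, Matrix.map_mul,
    zTransform_add, zTransform_mulVec, zTransform_mulVec, hstate, hconst, hconst, hconst,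
    add_mulVec, mulVec_mulVec, mulVec_mulVec]

end StateSpace

open Matrix LaurentSeries RatFunc in
/-- `G` has full column normal rank `m` over `ℂ(z)` iff the system has a
left inverse in the time-domain sense: zero output from zero initial state forces the
input to be zero. -/
theorem normalrank_eq_iff_leftInverse {n m p : ℕ} (A : Matrix (Fin n) (Fin n) ℂ)
    (B : Matrix (Fin n) (Fin m) ℂ) (C : Matrix (Fin p) (Fin n) ℂ)
    (D : Matrix (Fin p) (Fin m) ℂ) :
    (transferMatrix A B C D).rank = m ↔
    ∀ u : ℕ → Fin m → ℂ,
      (∀ k, C.mulVec (trajZero A B u k) + D.mulVec (u k) = 0) → ∀ k, u k = 0 := by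
  have hrank := rank_eq_card_iff_linearIndependent_col (transferMatrix A B C D)
  rw [Fintype.card_fin] at hrank
  rw [hrank, ← linearIndependent_col_map_iff (expandAtInfinity ℂ : RatFunc ℂ →+* ℂ⸨X⸩),
    ← mulVec_injective_iff, mulVec_injective_iff_of_isFractionRing ℂ⟦X⟧]
  have hy (u : ℕ → Fin m → ℂ) : (∀ k, C *ᵥ trajZero A B u k + D *ᵥ u k = 0) ↔
      (transferMatrix A B C D).map (expandAtInfinity ℂ : RatFunc ℂ →+* ℂ⸨X⸩) *ᵥ
        zTransform u = 0 := by
    rw [map_transferMatrix_mulVec_zTransform, zTransform_eq_zero_iff, funext_iff]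
    rfl
  refine ⟨fun h u hyu k => ?_, fun h v hv => ?_⟩
  · have hu := h (fun j => PowerSeries.mk fun k => u k j) ((hy u).mp hyu)
    ext j
    simpa using congr(PowerSeries.coeff k ($hu j))
  · have hv := h (fun k j => PowerSeries.coeff k (v j)) ((hy _).mpr (by rwa [zTransform_coeff]))
    ext j k
    simpa using congrFun (hv k) j
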